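/- arXiv:2310.17123 — 2 statements merged into one kernel-verified Lean document; each statement's English description precedes it below -/
import Mathlib

section
/- Let Ē ~ Exp(a_1+...+a_M) and Z = (Z_1,...,Z_M) ~ Be-Exp_M(a_1,...,a_M) be independent. Then the vector (Ē + Z_1, ..., Ē + Z_M) has the same distribution as a vector of independent exponential random variables with rates a_1,...,a_M respectively. -/
open MeasureTheory ProbabilityTheory Real Filter

noncomputable def bernMeasure {M : ℕ} (p : Fin M → ℝ) : Measure (Fin M) :=
  ∑ i, ENNReal.ofReal (p i) • Measure.dirac i

/-- The generalized Bernoulli--Exponential distribution `Be-Exp_M(a)`: the law of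
`((1-B_1)E_1,…,(1-B_M)E_M)` with `B ~ Be_M(a_i/∑a_j)` independent of independent
`E_i ~ Exp(a_i)`; coordinate `i` is zeroed out with probability `a_i/∑ a_j`. -/
noncomputable def beExpMeasure {M : ℕ} (a : Fin M → ℝ) : Measure (Fin M → ℝ) :=
  Measure.map (fun q : Fin M × (Fin M → ℝ) => fun j => if j = q.1 then 0 else q.2 j)
    ((bernMeasure (fun i => a i / ∑ j, a j)).prod (Measure.pi fun i => expMeasure (a i)))

/-!
Compare characteristic functions. With `φ_j(u) = a_j / (a_j - i u)` the characteristic function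
of `Exp(a_j)` and `s = ∑ a_j`, killing coordinate `k` replaces the factor `φ_k` by `1`, so `Z` has
characteristic function `∑_k (a_k / s) ∏_{j ≠ k} φ_j(u_j)`. Since
`a_k ∏_{j ≠ k} φ_j = (a_k - i u_k) ∏_j φ_j`, this equals `(s - i ∑ u_j) / s · ∏_j φ_j(u_j)`,
and the factor in front is cancelled by the characteristic function `s / (s - i ∑ u_j)` of
`Ē (1, …, 1)`.
-/

open Complex

lemma charFunDual_eq_charFun_apply_one (μ : Measure ℝ) (L : StrongDual ℝ ℝ) :
    charFunDual μ L = charFun μ (L 1) := by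
  rw [charFunDual_apply, charFun_apply_real]
  congr with x
  have hL : L x = x * L 1 := by simpa using L.map_smul x 1
  rw [hL, ofReal_mul, mul_comm (x : ℂ)]

lemma charFun_expMeasure {r : ℝ} (hr : 0 < r) (u : ℝ) :
    charFun (expMeasure r) u = r / (r - u * I) := by
  have hpdf : ∀ x, (exponentialPDF r x).toReal =
      Set.indicator (Set.Ici 0) (fun x => r * rexp (-(r * x))) x := by
    intro x
    rw [exponentialPDF_eq, ENNReal.toReal_ofReal (by split_ifs <;> positivity)]
    simp [Set.indicator]
  have hre : (-(r : ℂ) + u * I).re < 0 := by simpa using hr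
  calc charFun (expMeasure r) u
      = ∫ x, (exponentialPDF r x).toReal • cexp (u * x * I) := by
        rw [charFun_apply_real]
        exact integral_withDensity_eq_integral_toReal_smul
          (measurable_exponentialPDFReal r).ennreal_ofReal (by simp)
          (fun x : ℝ => cexp (u * x * I))
    _ = ∫ x : ℝ in Set.Ioi 0, r * cexp ((-(r : ℂ) + u * I) * x) := by
        simp_rw [hpdf, ← integral_Ici_eq_integral_Ioi, ← integral_indicator measurableSet_Ici]
        congr with x
        by_cases hx : x ∈ Set.Ici 0
        · simp only [Set.indicator_of_mem hx, Complex.real_smul, ofReal_mul, ofReal_exp]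
          rw [mul_assoc, ← Complex.exp_add]
          push_cast
          ring_nf
        · simp [Set.indicator_of_notMem hx]
    _ = r / (r - u * I) := by
        rw [integral_const_mul, integral_exp_mul_complex_Ioi hre, ofReal_zero, mul_zero,
          Complex.exp_zero, show -(r : ℂ) + u * I = -(r - u * I) by ring, neg_div_neg_eq,
          mul_one_div]

lemma charFunDual_expMeasure {r : ℝ} (hr : 0 < r) (L : StrongDual ℝ ℝ) :
    charFunDual (expMeasure r) L = r / (r - L 1 * I) := by
  rw [charFunDual_eq_charFun_apply_one, charFun_expMeasure hr]

lemma charFunDual_pi_expMeasure {ι : Type*} [Fintype ι] [DecidableEq ι] {a : ι → ℝ}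
    (ha : ∀ i, 0 < a i) (L : StrongDual ℝ (ι → ℝ)) :
    charFunDual (Measure.pi fun i => expMeasure (a i)) L
      = ∏ i, a i / (a i - L (Pi.single i 1) * I) := by
  have := fun i => isProbabilityMeasure_expMeasure (ha i)
  rw [charFunDual_pi]
  simp [charFunDual_expMeasure (ha _)]

lemma charFunDual_map_const {ι : Type*} [Fintype ι] [DecidableEq ι] (μ : Measure ℝ)
    (L : StrongDual ℝ (ι → ℝ)) :
    charFunDual (μ.map fun e _ => e) L = charFun μ (∑ i, L (Pi.single i 1)) := by
  have hconst : (fun e : ℝ => fun _ : ι => e) = ContinuousLinearMap.pi fun _ => .id ℝ ℝ := rfl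
  rw [hconst, charFunDual_map, charFunDual_eq_charFun_apply_one, ContinuousLinearMap.comp_apply,
    ← ContinuousLinearMap.sum_comp_single ℝ (fun _ : ι => ℝ) L]
  rfl

noncomputable def zeroAt {ι : Type*} [DecidableEq ι] (k : ι) : (ι → ℝ) →L[ℝ] (ι → ℝ) :=
  ContinuousLinearMap.pi fun j => if j = k then 0 else ContinuousLinearMap.proj j

lemma zeroAt_apply {ι : Type*} [DecidableEq ι] (k : ι) (x : ι → ℝ) (j : ι) :
    zeroAt k x j = if j = k then 0 else x j := by
  by_cases h : j = k <;> simp [zeroAt, h]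

lemma zeroAt_single_one {ι : Type*} [DecidableEq ι] (k j : ι) :
    zeroAt k (Pi.single j 1) = if j = k then 0 else Pi.single j 1 := by
  ext i
  by_cases hjk : j = k <;> by_cases hik : i = k <;> simp [zeroAt_apply, hjk, hik, Pi.single_apply]

instance isFiniteMeasure_bernMeasure {M : ℕ} (p : Fin M → ℝ) : IsFiniteMeasure (bernMeasure p) :=
  ⟨by simp [bernMeasure, ENNReal.sum_lt_top]⟩

lemma integral_bernMeasure {M : ℕ} {E : Type*} [NormedAddCommGroup E] [NormedSpace ℝ E]
    [CompleteSpace E] {p : Fin M → ℝ} (hp : ∀ i, 0 ≤ p i) (f : Fin M → E) :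
    ∫ i, f i ∂bernMeasure p = ∑ i, p i • f i := by
  rw [bernMeasure, integral_finsetSum_measure fun i _ =>
    (integrable_dirac (by simp)).smul_measure ENNReal.ofReal_ne_top]
  simp [integral_smul_measure, ENNReal.toReal_ofReal (hp _)]

lemma beExpMeasure_eq_map_zeroAt {M : ℕ} (a : Fin M → ℝ) :
    beExpMeasure a = ((bernMeasure fun i => a i / ∑ j, a j).prod
      (Measure.pi fun i => expMeasure (a i))).map fun q => zeroAt q.1 q.2 := by
  rw [beExpMeasure]
  congr with q j
  rw [zeroAt_apply]

lemma charFunDual_beExpMeasure {M : ℕ} {a : Fin M → ℝ} (ha : ∀ i, 0 < a i)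
    (L : StrongDual ℝ (Fin M → ℝ)) :
    charFunDual (beExpMeasure a) L = ∑ k, a k / (∑ j, a j) *
      ∏ j, if j = k then 1 else a j / (a j - L (Pi.single j 1) * I) := by
  have hg : Measurable fun q : Fin M × (Fin M → ℝ) => zeroAt q.1 q.2 :=
    measurable_from_prod_countable_right fun k => (zeroAt k).measurable
  have := fun i => isProbabilityMeasure_expMeasure (ha i)
  have hp : ∀ k, 0 ≤ a k / ∑ j, a j := fun k =>
    div_nonneg (ha k).le (Finset.sum_nonneg fun j _ => (ha j).le)
  rw [beExpMeasure_eq_map_zeroAt, charFunDual_apply, integral_map hg.aemeasurable (by fun_prop),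
    integral_prod _ (Integrable.of_bound (by fun_prop) 1 (by simp [Complex.norm_exp])),
    integral_bernMeasure hp]
  refine Finset.sum_congr rfl fun k _ => ?_
  rw [Complex.real_smul, ofReal_div]
  change _ * charFunDual _ (L.comp (zeroAt k)) = _
  rw [charFunDual_pi_expMeasure ha]
  congr 1
  refine Finset.prod_congr rfl fun j _ => ?_
  rw [ContinuousLinearMap.comp_apply, zeroAt_single_one]
  split_ifs
  · simp [(ha j).ne']
  · rfl

lemma sum_mul_prod_ite_one_div_sub {ι K : Type*} [Fintype ι] [DecidableEq ι] [Field K]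
    (a w : ι → K) (h : ∀ j, a j - w j ≠ 0) :
    ∑ k, a k * ∏ j, (if j = k then 1 else a j / (a j - w j))
      = (∑ k, (a k - w k)) * ∏ j, a j / (a j - w j) := by
  rw [Finset.sum_mul]
  refine Finset.sum_congr rfl fun k _ => ?_
  have hsplit : ∏ j, a j / (a j - w j)
      = a k / (a k - w k) * ∏ j, (if j = k then 1 else a j / (a j - w j)) := by
    rw [← Fintype.prod_ite_eq' k fun j => a j / (a j - w j), ← Finset.prod_mul_distrib]
    exact Finset.prod_congr rfl fun j _ => by split_ifs <;> simp [*]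
  rw [hsplit, ← mul_assoc, mul_div_cancel₀ _ (h k)]

lemma ofReal_sub_mul_I_ne_zero {r : ℝ} (hr : r ≠ 0) (u : ℝ) : (r : ℂ) - u * I ≠ 0 := by
  intro h
  simpa [hr] using congrArg Complex.re h

lemma charFunDual_map_const_expMeasure_mul_charFunDual_beExpMeasure {M : ℕ} [NeZero M]
    {a : Fin M → ℝ} (ha : ∀ i, 0 < a i) (L : StrongDual ℝ (Fin M → ℝ)) :
    charFunDual ((expMeasure (∑ j, a j)).map fun e _ => e) L * charFunDual (beExpMeasure a) L
      = charFunDual (Measure.pi fun i => expMeasure (a i)) L := by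
  have hs : 0 < ∑ j, a j := Finset.sum_pos (fun i _ => ha i) Finset.univ_nonempty
  rw [charFunDual_map_const, charFun_expMeasure hs, charFunDual_beExpMeasure ha,
    charFunDual_pi_expMeasure ha]
  set u : Fin M → ℝ := fun j => L (Pi.single j 1)
  have hkey := sum_mul_prod_ite_one_div_sub (fun j => (a j : ℂ)) (fun j => u j * I)
    fun j => ofReal_sub_mul_I_ne_zero (ha j).ne' (u j)
  have hsum : ∑ k, ((a k : ℂ) - u k * I) = ↑(∑ j, a j) - ↑(∑ j, u j) * I := by
    push_cast
    rw [Finset.sum_sub_distrib, Finset.sum_mul]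
  have hmix : ∑ k, (a k : ℂ) / ↑(∑ j, a j) *
        ∏ j, (if j = k then 1 else (a j : ℂ) / (a j - u j * I))
      = (∑ k, (a k : ℂ) * ∏ j, (if j = k then 1 else (a j : ℂ) / (a j - u j * I)))
        / ↑(∑ j, a j) := by
    rw [Finset.sum_div]
    exact Finset.sum_congr rfl fun k _ => div_mul_eq_mul_div _ _ _
  rw [hmix, hkey, hsum, mul_div_assoc, ← mul_assoc,
    div_mul_cancel₀ _ (ofReal_sub_mul_I_ne_zero hs.ne' _),
    mul_div_cancel₀ _ (ofReal_ne_zero.mpr hs.ne')]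

theorem exp_plus_bernoulliExponential_eq_indep_exponentials
    {Ω : Type*} [MeasurableSpace Ω] (P : Measure Ω) [IsProbabilityMeasure P]
    {M : ℕ} (hM : 2 ≤ M) (a : Fin M → ℝ) (ha : ∀ i, 0 < a i)
    (Ebar : Ω → ℝ) (Z : Ω → Fin M → ℝ)
    (hmeas1 : Measurable Ebar) (hmeas2 : Measurable Z)
    (hindep : IndepFun Ebar Z P)
    (hEbar : Measure.map Ebar P = expMeasure (∑ j, a j))
    (hZ : Measure.map Z P = beExpMeasure a) :
    Measure.map (fun ω i => Ebar ω + Z ω i) P = Measure.pi fun i => expMeasure (a i) := by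
  have : NeZero M := ⟨by omega⟩
  have := fun i => isProbabilityMeasure_expMeasure (ha i)
  have hconst : Measurable fun (e : ℝ) (_ : Fin M) => e :=
    measurable_pi_lambda _ fun _ => measurable_id
  refine Measure.ext_of_charFunDual (funext fun L => ?_)
  rw [show (fun ω i => Ebar ω + Z ω i) = ((fun e (_ : Fin M) => e) ∘ Ebar) + Z from rfl,
    (hindep.comp hconst measurable_id).charFunDual_map_add_eq_mul
      (hconst.comp hmeas1).aemeasurable hmeas2.aemeasurable,
    Pi.mul_apply, ← Measure.map_map hconst hmeas1, hEbar, hZ]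
  exact charFunDual_map_const_expMeasure_mul_charFunDual_beExpMeasure ha L
end

section
/- Let X ~ Be-Exp_M(a_1,...,a_M). Then for any x = (x_1,...,x_M) with nonnegative entries, the CDF of X satisfies F_X(x) = p_M · F_{(E_1,...,E_{M-1})}(x_1,...,x_{M-1}) + (1 - p_M) · F_Z(x_1,...,x_{M-1}) · (1 - e^{-a_M x_M}), where p_M = a_M/(a_1+...+a_M), (E_1,...,E_{M-1}) are independent exponentials with rates a_1,...,a_{M-1}, and Z ~ Be-Exp_{M-1}(a_1,...,a_{M-1}). -/
open MeasureTheory ProbabilityTheory Real Filter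

/-- The Dirichlet distribution `D_M(a)`: the law of `(W_1/S,…,W_M/S)` for independent
`W_i ~ Gamma(a_i,1)` and `S = ∑ W_j`. -/
noncomputable def dirichletMeasure {M : ℕ} (a : Fin M → ℝ) : Measure (Fin M → ℝ) :=
  Measure.map (fun w i => w i / ∑ j, w j) (Measure.pi fun i => gammaMeasure (a i) 1)


/-! Conditioning on which coordinate is zeroed, the CDF of `Be-Exp_M(a)` at `x ≥ 0` is
`∑ᵢ pᵢ ∏_{j ≠ i} (1 - e^{-a_j x_j})` with `pᵢ = aᵢ / ∑ a`. The summand `i = M` is the first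
term. For `i < M` one has `pᵢ = (1 - p_M) · aᵢ / (a₁ + ⋯ + a_{M-1})` and the product contains
the factor `1 - e^{-a_M x_M}`; what remains sums to the CDF of `Be-Exp_{M-1}`. -/

open Set Function

instance sigmaFinite_expMeasure (r : ℝ) : SigmaFinite (expMeasure r) :=
  SigmaFinite.withDensity_ofReal (gammaPDFReal 1 r)

lemma expMeasure_Iic {r : ℝ} (hr : 0 < r) (x : ℝ) :
    expMeasure r (Iic x) = ENNReal.ofReal (1 - exp (-r * x)) := by
  rw [expMeasure, gammaMeasure, withDensity_apply _ measurableSet_Iic]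
  change ∫⁻ y in Iic x, exponentialPDF r y = _
  rw [lintegral_exponentialPDF_eq_antiDeriv hr, neg_mul]
  split_ifs with hx
  · rfl
  · rw [ENNReal.ofReal_zero, eq_comm, ENNReal.ofReal_eq_zero, sub_nonpos, one_le_exp_iff]
    nlinarith

lemma measure_pi_expMeasure_Iic {ι : Type*} [Fintype ι] {r : ι → ℝ} (hr : ∀ i, 0 < r i)
    (x : ι → ℝ) :
    Measure.pi (fun i => expMeasure (r i)) (Iic x) =
      ∏ i, ENNReal.ofReal (1 - exp (-r i * x i)) := by
  rw [← pi_univ_Iic, Measure.pi_pi]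
  exact Finset.prod_congr rfl fun i _ => expMeasure_Iic (hr i) (x i)

lemma preimage_update_Iic {ι : Type*} [DecidableEq ι] {x : ι → ℝ} {i : ι} {c : ℝ}
    (hc : c ≤ x i) :
    (update · i c) ⁻¹' Iic x = pi univ (update (fun j => Iic (x j)) i univ) := by
  ext e
  simp only [mem_preimage, mem_Iic, mem_univ_pi, Pi.le_def]
  refine forall_congr' fun j => ?_
  rcases eq_or_ne j i with rfl | hj
  · simpa using hc
  · simp [hj]

lemma beExpMeasure_apply {M : ℕ} (a : Fin M → ℝ) {s : Set (Fin M → ℝ)} (hs : MeasurableSet s) :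
    beExpMeasure a s = ∑ i, ENNReal.ofReal (a i / ∑ j, a j) *
      Measure.pi (fun j => expMeasure (a j)) ((update · i 0) ⁻¹' s) := by
  have hφ : (fun q : Fin M × (Fin M → ℝ) => fun j => if j = q.1 then 0 else q.2 j) =
      fun q => update q.2 q.1 0 := by
    ext q j
    rw [update_apply]
  have hφm : Measurable fun q : Fin M × (Fin M → ℝ) => update q.2 q.1 0 :=
    measurable_from_prod_countable_right fun _ => measurable_update_left
  rw [beExpMeasure, hφ, Measure.map_apply hφm hs, Measure.prod_apply (hφm hs), bernMeasure,
    lintegral_finsetSum_measure]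
  simp only [lintegral_smul_measure, lintegral_dirac, smul_eq_mul]
  rfl

lemma beExpMeasure_Iic {M : ℕ} {a : Fin M → ℝ} (ha : ∀ i, 0 < a i) {x : Fin M → ℝ}
    (hx : ∀ i, 0 ≤ x i) :
    beExpMeasure a (Iic x) = ∑ i, ENNReal.ofReal (a i / ∑ j, a j) *
      ∏ j, update (fun j => ENNReal.ofReal (1 - exp (-a j * x j))) i 1 j := by
  rw [beExpMeasure_apply a measurableSet_Iic]
  refine Finset.sum_congr rfl fun i _ => ?_
  rw [preimage_update_Iic (hx i), Measure.pi_pi]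
  congr 1
  refine Finset.prod_congr rfl fun j _ => ?_
  rw [apply_update (fun j => expMeasure (a j)),
    (isProbabilityMeasure_expMeasure (ha i)).measure_univ]
  congr 1
  ext k
  exact expMeasure_Iic (ha k) (x k)

lemma Fin.prod_update_last {β : Type*} [CommMonoid β] {n : ℕ} (f : Fin (n + 1) → β) (b : β) :
    ∏ j, update f (Fin.last n) b j = (∏ j : Fin n, f j.castSucc) * b := by
  simp [Fin.prod_univ_castSucc, (Fin.castSucc_lt_last _).ne]

lemma Fin.prod_update_castSucc {β : Type*} [CommMonoid β] {n : ℕ} (f : Fin (n + 1) → β)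
    (i : Fin n) (b : β) :
    ∏ j, update f i.castSucc b j =
      (∏ j, update (fun j : Fin n => f j.castSucc) i b j) * f (Fin.last n) := by
  rw [Fin.prod_univ_castSucc, update_of_ne (Fin.castSucc_lt_last i).ne']
  congr 1
  exact Finset.prod_congr rfl fun j _ =>
    congrFun (update_comp_eq_of_injective f (Fin.castSucc_injective n) i b) j

lemma ofReal_div_sum_castSucc {n : ℕ} {a : Fin (n + 1) → ℝ} (ha : ∀ j, 0 < a j) (i : Fin n) :
    ENNReal.ofReal (a i.castSucc / ∑ j, a j) =
      ENNReal.ofReal (1 - a (Fin.last n) / ∑ j, a j) *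
        ENNReal.ofReal (a i.castSucc / ∑ j : Fin n, a j.castSucc) := by
  have hS' : 0 < ∑ j : Fin n, a j.castSucc :=
    Finset.sum_pos (fun j _ => ha _) ⟨i, Finset.mem_univ i⟩
  have hS : 0 < ∑ j, a j := by rw [Fin.sum_univ_castSucc]; linarith [ha (Fin.last n)]
  have hp : 1 - a (Fin.last n) / ∑ j, a j = (∑ j : Fin n, a j.castSucc) / ∑ j, a j := by
    rw [eq_div_iff hS.ne', sub_mul, one_mul, div_mul_cancel₀ _ hS.ne', Fin.sum_univ_castSucc]
    ring
  rw [hp, ← ENNReal.ofReal_mul (by positivity)]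
  congr 1
  field_simp

theorem bernoulliExponential_cdf_decomposition_general
    {M : ℕ} (a : Fin (M + 1) → ℝ) (ha : ∀ i, 0 < a i)
    (x : Fin (M + 1) → ℝ) (hx : ∀ i, 0 ≤ x i) :
    beExpMeasure a {f | ∀ i, f i ≤ x i} =
      ENNReal.ofReal (a (Fin.last M) / ∑ j, a j) *
          (Measure.pi fun i : Fin M => expMeasure (a i.castSucc))
            {g | ∀ i : Fin M, g i ≤ x i.castSucc} +
        ENNReal.ofReal (1 - a (Fin.last M) / ∑ j, a j) *
          beExpMeasure (fun i : Fin M => a i.castSucc) {g | ∀ i : Fin M, g i ≤ x i.castSucc} *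
          ENNReal.ofReal (1 - Real.exp (-(a (Fin.last M)) * x (Fin.last M))) := by
  change beExpMeasure a (Iic x) = _ * Measure.pi _ (Iic fun i : Fin M => x i.castSucc) +
    _ * beExpMeasure _ (Iic fun i : Fin M => x i.castSucc) * _
  rw [beExpMeasure_Iic ha hx, beExpMeasure_Iic (fun i => ha _) (fun i => hx _),
    measure_pi_expMeasure_Iic (fun i => ha _), Fin.sum_univ_castSucc, Fin.prod_update_last,
    mul_one, add_comm]
  simp_rw [Fin.prod_update_castSucc, ofReal_div_sum_castSucc ha, Finset.mul_sum, Finset.sum_mul]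
  congr 1
  exact Finset.sum_congr rfl fun i _ => by ring

theorem bernoulliExponential_cdf_decomposition
    {M : ℕ} (hM : 1 ≤ M) (a : Fin (M + 1) → ℝ) (ha : ∀ i, 0 < a i)
    (x : Fin (M + 1) → ℝ) (hx : ∀ i, 0 ≤ x i) :
    beExpMeasure a {f | ∀ i, f i ≤ x i} =
      ENNReal.ofReal (a (Fin.last M) / ∑ j, a j) *
          (Measure.pi fun i : Fin M => expMeasure (a i.castSucc))
            {g | ∀ i : Fin M, g i ≤ x i.castSucc} +
        ENNReal.ofReal (1 - a (Fin.last M) / ∑ j, a j) *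
          beExpMeasure (fun i : Fin M => a i.castSucc) {g | ∀ i : Fin M, g i ≤ x i.castSucc} *
          ENNReal.ofReal (1 - Real.exp (-(a (Fin.last M)) * x (Fin.last M))) :=
  bernoulliExponential_cdf_decomposition_general a ha x hx
end
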